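/- arXiv:2212.14424 — 2 statements merged into one kernel-verified Lean document; each statement's English description precedes it below -/
import Mathlib

section
/- If T* minimizes L_T(T) = KL(T_# p || q) + (1/(2h)) E_{x ~ p} ||x - T(x)||^2 over maps T: R^d -> R^d, then rho* = (T*)_# p minimizes L_rho(rho) = KL(rho || q) + (1/(2h)) W_2^2(p, rho) over probability densities rho with finite second moment. -/
/-! The graph of `T` couples `p` with `T_# p`, so `W₂²(p, T_# p)` is at most the transport cost
of `T`, while an optimal map `T_ρ` onto `ρ` realises `W₂²(p, ρ)` exactly. Hence
`L_ρ(T*_# p) ≤ L_T(T*) ≤ L_T(T_ρ) = L_ρ(ρ)`. -/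

open MeasureTheory
noncomputable section

/-- Squared Wasserstein-2 distance (Kantorovich formulation, over couplings). -/
noncomputable def W2sq {d : ℕ} (μ ν : Measure (EuclideanSpace ℝ (Fin d))) : ℝ :=
  sInf {c : ℝ | ∃ pl : Measure (EuclideanSpace ℝ (Fin d) × EuclideanSpace ℝ (Fin d)),
    pl.map Prod.fst = μ ∧ pl.map Prod.snd = ν ∧ c = ∫ z, ‖z.1 - z.2‖ ^ 2 ∂pl}

/-- Kullback–Leibler divergence `∫ log (dμ/dν) dμ` between measures. -/
noncomputable def klDivM {d : ℕ} (μ ν : Measure (EuclideanSpace ℝ (Fin d))) : ℝ :=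
  ∫ x, Real.log ((μ.rnDeriv ν x).toReal) ∂μ

section W2sq

variable {d : ℕ}

theorem W2sq_le_integral_of_coupling {μ ν : Measure (EuclideanSpace ℝ (Fin d))}
    (pl : Measure (EuclideanSpace ℝ (Fin d) × EuclideanSpace ℝ (Fin d)))
    (hfst : pl.map Prod.fst = μ) (hsnd : pl.map Prod.snd = ν) :
    W2sq μ ν ≤ ∫ z, ‖z.1 - z.2‖ ^ 2 ∂pl := by
  refine csInf_le ⟨0, ?_⟩ ⟨pl, hfst, hsnd, rfl⟩
  rintro c ⟨pl', -, -, rfl⟩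
  exact integral_nonneg fun z => by positivity

theorem W2sq_map_le_integral (μ : Measure (EuclideanSpace ℝ (Fin d)))
    {T : EuclideanSpace ℝ (Fin d) → EuclideanSpace ℝ (Fin d)} (hT : Measurable T) :
    W2sq μ (μ.map T) ≤ ∫ x, ‖x - T x‖ ^ 2 ∂μ := by
  have hgraph : Measurable fun x => (x, T x) := measurable_id.prodMk hT
  have hcost : ∫ z, ‖z.1 - z.2‖ ^ 2 ∂(μ.map fun x => (x, T x)) = ∫ x, ‖x - T x‖ ^ 2 ∂μ :=
    integral_map hgraph.aemeasurable (by fun_prop)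
  rw [← hcost]
  refine W2sq_le_integral_of_coupling _ ?_ ?_
  · rw [Measure.map_map measurable_fst hgraph]
    exact Measure.map_id
  · rw [Measure.map_map measurable_snd hgraph]
    rfl

end W2sq

theorem jko_map_minimizer_gives_density_minimizer_general {d : ℕ} (h : ℝ) (hh : 0 < h)
    (p q : Measure (EuclideanSpace ℝ (Fin d)))
    (hOT : ∀ ρ : Measure (EuclideanSpace ℝ (Fin d)), IsProbabilityMeasure ρ →
      ρ ≪ volume → Integrable (fun x => ‖x‖ ^ 2) ρ →
      ∃ T : EuclideanSpace ℝ (Fin d) → EuclideanSpace ℝ (Fin d),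
        Measurable T ∧ p.map T = ρ ∧ (∫ x, ‖x - T x‖ ^ 2 ∂p) = W2sq p ρ)
    (Tstar : EuclideanSpace ℝ (Fin d) → EuclideanSpace ℝ (Fin d))
    (hTmeas : Measurable Tstar)
    (hTmin : ∀ T : EuclideanSpace ℝ (Fin d) → EuclideanSpace ℝ (Fin d), Measurable T →
      klDivM (p.map Tstar) q + (1 / (2 * h)) * ∫ x, ‖x - Tstar x‖ ^ 2 ∂p ≤
      klDivM (p.map T) q + (1 / (2 * h)) * ∫ x, ‖x - T x‖ ^ 2 ∂p) :
    ∀ ρ : Measure (EuclideanSpace ℝ (Fin d)), IsProbabilityMeasure ρ →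
      ρ ≪ volume → Integrable (fun x => ‖x‖ ^ 2) ρ →
      klDivM (p.map Tstar) q + (1 / (2 * h)) * W2sq p (p.map Tstar) ≤
      klDivM ρ q + (1 / (2 * h)) * W2sq p ρ := by
  intro ρ hρ hρac hρ2
  obtain ⟨T, hT, rfl, hTcost⟩ := hOT ρ hρ hρac hρ2
  calc klDivM (p.map Tstar) q + (1 / (2 * h)) * W2sq p (p.map Tstar)
      ≤ klDivM (p.map Tstar) q + (1 / (2 * h)) * ∫ x, ‖x - Tstar x‖ ^ 2 ∂p := by
        gcongr
        exact W2sq_map_le_integral p hTmeas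
    _ ≤ klDivM (p.map T) q + (1 / (2 * h)) * ∫ x, ‖x - T x‖ ^ 2 ∂p := hTmin T hT
    _ = klDivM (p.map T) q + (1 / (2 * h)) * W2sq p (p.map T) := by rw [hTcost]

/-- If `T*` minimizes the map-space JKO objective
`L_T(T) = KL(T_#p‖q) + E_p‖x - T(x)‖²/(2h)`, then `ρ* = (T*)_#p` minimizes the
density-space objective `L_ρ(ρ) = KL(ρ‖q) + W₂²(p,ρ)/(2h)` over probability
densities with finite second moment. -/
theorem jko_map_minimizer_gives_density_minimizer {d : ℕ} (h : ℝ) (hh : 0 < h)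
    (p q : Measure (EuclideanSpace ℝ (Fin d)))
    [IsProbabilityMeasure p] [IsProbabilityMeasure q]
    (hpac : p ≪ volume) (hqac : q ≪ volume)
    (hp2 : Integrable (fun x => ‖x‖ ^ 2) p) (hq2 : Integrable (fun x => ‖x‖ ^ 2) q)
    (hOT : ∀ ρ : Measure (EuclideanSpace ℝ (Fin d)), IsProbabilityMeasure ρ →
      ρ ≪ volume → Integrable (fun x => ‖x‖ ^ 2) ρ →
      ∃ T : EuclideanSpace ℝ (Fin d) → EuclideanSpace ℝ (Fin d),
        Measurable T ∧ p.map T = ρ ∧ (∫ x, ‖x - T x‖ ^ 2 ∂p) = W2sq p ρ)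
    (Tstar : EuclideanSpace ℝ (Fin d) → EuclideanSpace ℝ (Fin d))
    (hTmeas : Measurable Tstar)
    (hTmin : ∀ T : EuclideanSpace ℝ (Fin d) → EuclideanSpace ℝ (Fin d), Measurable T →
      klDivM (p.map Tstar) q + (1 / (2 * h)) * ∫ x, ‖x - Tstar x‖ ^ 2 ∂p ≤
      klDivM (p.map T) q + (1 / (2 * h)) * ∫ x, ‖x - T x‖ ^ 2 ∂p) :
    ∀ ρ : Measure (EuclideanSpace ℝ (Fin d)), IsProbabilityMeasure ρ →
      ρ ≪ volume → Integrable (fun x => ‖x‖ ^ 2) ρ →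
      klDivM (p.map Tstar) q + (1 / (2 * h)) * W2sq p (p.map Tstar) ≤
      klDivM ρ q + (1 / (2 * h)) * W2sq p ρ :=
  jko_map_minimizer_gives_density_minimizer_general h hh p q hOT Tstar hTmeas hTmin
end
end

section
/- Let x(t) solve x'(t) = f(x(t), t) on [t0, t1] with C^1 vector field f, and rho a positive C^1 solution of the continuity equation ∂_t rho + div(rho f) = 0. Then log rho(x(t1), t1) = log rho(x(t0), t0) - ∫_{t0}^{t1} div f(x(s), s) ds. -/
/-!
Along a trajectory, the chain rule gives `d/ds ρ(x s, s) = ∇ρ · f + ∂ₜρ`, and the continuity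
equation together with the product rule `div (ρ f) = ∇ρ · f + ρ div f` turns this into
`d/ds ρ(x s, s) = -ρ div f`. Hence `log ρ(x s, s)` has derivative `-div f(x s, s)`, which is
continuous in `s` because `f` is `C¹`, and the fundamental theorem of calculus concludes.
-/

noncomputable section

/-- Spatial divergence of a vector field on `ℝ^d`. -/
noncomputable def divg {d : ℕ} (f : EuclideanSpace ℝ (Fin d) → EuclideanSpace ℝ (Fin d))
    (x : EuclideanSpace ℝ (Fin d)) : ℝ :=
  ∑ i, (fderiv ℝ f x (EuclideanSpace.single i (1 : ℝ))) i

open Set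

section Partial

variable {E G : Type*} [NormedAddCommGroup E] [NormedSpace ℝ E]
  [NormedAddCommGroup G] [NormedSpace ℝ G] {F : E → ℝ → G} {y : E} {t : ℝ}

theorem hasFDerivAt_partial_space
    (hF : DifferentiableAt ℝ (fun z : E × ℝ => F z.1 z.2) (y, t)) :
    HasFDerivAt (fun z => F z t)
      ((fderiv ℝ (fun z : E × ℝ => F z.1 z.2) (y, t)).comp (.inl ℝ E ℝ)) y :=
  hF.hasFDerivAt.comp (f := fun e => (e, t)) y (hasFDerivAt_prodMk_left y t)

theorem hasDerivAt_partial_time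
    (hF : DifferentiableAt ℝ (fun z : E × ℝ => F z.1 z.2) (y, t)) :
    HasDerivAt (fun τ => F y τ) (fderiv ℝ (fun z : E × ℝ => F z.1 z.2) (y, t) (0, 1)) t :=
  hF.hasFDerivAt.comp_hasDerivAt t ((hasDerivAt_const t y).prodMk (hasDerivAt_id t))

theorem hasDerivAt_along_curve {x : ℝ → E} {v : E}
    (hF : DifferentiableAt ℝ (fun z : E × ℝ => F z.1 z.2) (x t, t)) (hx : HasDerivAt x v t) :
    HasDerivAt (fun s => F (x s) s)
      (fderiv ℝ (fun z => F z t) (x t) v + deriv (fun τ => F (x t) τ) t) t := by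
  rw [(hasFDerivAt_partial_space hF).fderiv, (hasDerivAt_partial_time hF).deriv,
    ContinuousLinearMap.comp_apply, ContinuousLinearMap.inl_apply, ← map_add,
    Prod.mk_add_mk, add_zero, zero_add]
  exact hF.hasFDerivAt.comp_hasDerivAt (f := fun s => (x s, s)) t (hx.prodMk (hasDerivAt_id t))

end Partial

section Divergence

variable {d : ℕ}

theorem ContinuousLinearMap.sum_apply_single_mul (L : EuclideanSpace ℝ (Fin d) →L[ℝ] ℝ)
    (v : EuclideanSpace ℝ (Fin d)) :
    ∑ i, L (EuclideanSpace.single i 1) * v i = L v := by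
  conv_rhs => rw [← (EuclideanSpace.basisFun (Fin d) ℝ).sum_repr v]
  simp [map_sum, mul_comm]

theorem divg_smul {g : EuclideanSpace ℝ (Fin d) → ℝ}
    {F : EuclideanSpace ℝ (Fin d) → EuclideanSpace ℝ (Fin d)} {y : EuclideanSpace ℝ (Fin d)}
    (hg : DifferentiableAt ℝ g y) (hF : DifferentiableAt ℝ F y) :
    divg (fun z => g z • F z) y = fderiv ℝ g y (F y) + g y * divg F y := by
  unfold divg
  rw [fderiv_fun_smul hg hF]
  simp only [add_apply, smul_apply, ContinuousLinearMap.smulRight_apply, PiLp.add_apply,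
    PiLp.smul_apply, smul_eq_mul, Finset.sum_add_distrib, ← Finset.mul_sum,
    ContinuousLinearMap.sum_apply_single_mul]
  ring

theorem continuous_divg_of_contDiff
    {f : EuclideanSpace ℝ (Fin d) → ℝ → EuclideanSpace ℝ (Fin d)}
    (hf : ContDiff ℝ 1 fun z : EuclideanSpace ℝ (Fin d) × ℝ => f z.1 z.2) :
    Continuous fun p : EuclideanSpace ℝ (Fin d) × ℝ => divg (fun z => f z p.2) p.1 := by
  have hdiff := hf.differentiable one_ne_zero
  have hD := hf.continuous_fderiv one_ne_zero
  simp only [divg, fun p : EuclideanSpace ℝ (Fin d) × ℝ =>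
    (hasFDerivAt_partial_space (F := f) (hdiff p)).fderiv]
  fun_prop

end Divergence

theorem hasDerivAt_log_density_along_flow {d : ℕ}
    {f : EuclideanSpace ℝ (Fin d) → ℝ → EuclideanSpace ℝ (Fin d)}
    {rho : EuclideanSpace ℝ (Fin d) → ℝ → ℝ} {x : ℝ → EuclideanSpace ℝ (Fin d)} {u : ℝ}
    (hf : DifferentiableAt ℝ (fun z : EuclideanSpace ℝ (Fin d) × ℝ => f z.1 z.2) (x u, u))
    (hrho : DifferentiableAt ℝ (fun z : EuclideanSpace ℝ (Fin d) × ℝ => rho z.1 z.2) (x u, u))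
    (hpos : 0 < rho (x u) u)
    (hcontinuity : deriv (fun τ => rho (x u) τ) u + divg (fun z => rho z u • f z u) (x u) = 0)
    (hx : HasDerivAt x (f (x u) u) u) :
    HasDerivAt (fun s => Real.log (rho (x s) s)) (-divg (fun z => f z u) (x u)) u := by
  have hdensity : HasDerivAt (fun s => rho (x s) s)
      (-(rho (x u) u * divg (fun z => f z u) (x u))) u := by
    refine (hasDerivAt_along_curve hrho hx).congr_deriv ?_
    rw [divg_smul (hasFDerivAt_partial_space hrho).differentiableAt
      (hasFDerivAt_partial_space hf).differentiableAt] at hcontinuity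
    linarith
  convert hdensity.log hpos.ne' using 1
  field_simp

/-- Integrated change of variables for neural ODE flows:
`log ρ(x(t₁), t₁) = log ρ(x(t₀), t₀) - ∫_{t₀}^{t₁} div f(x(s), s) ds`. -/
theorem integrated_change_of_variables {d : ℕ} (t0 t1 : ℝ) (ht : t0 ≤ t1)
    (f : EuclideanSpace ℝ (Fin d) → ℝ → EuclideanSpace ℝ (Fin d))
    (hf : ContDiff ℝ 1 fun z : EuclideanSpace ℝ (Fin d) × ℝ => f z.1 z.2)
    (rho : EuclideanSpace ℝ (Fin d) → ℝ → ℝ)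
    (hrho : ContDiff ℝ 1 fun z : EuclideanSpace ℝ (Fin d) × ℝ => rho z.1 z.2)
    (hpos : ∀ y t, 0 < rho y t)
    (hcontinuity : ∀ y t,
      deriv (fun τ => rho y τ) t + divg (fun z => rho z t • f z t) y = 0)
    (x : ℝ → EuclideanSpace ℝ (Fin d))
    (hx : ∀ u ∈ Set.Icc t0 t1, HasDerivAt x (f (x u) u) u) :
    Real.log (rho (x t1) t1) =
      Real.log (rho (x t0) t0) - ∫ s in t0..t1, divg (fun z => f z s) (x s) := by
  rw [← uIcc_of_le ht] at hx
  have hlog : ∀ u ∈ uIcc t0 t1,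
      HasDerivAt (fun s => Real.log (rho (x s) s)) (-divg (fun z => f z u) (x u)) u :=
    fun u hu => hasDerivAt_log_density_along_flow (hf.differentiable one_ne_zero _)
      (hrho.differentiable one_ne_zero _) (hpos _ _) (hcontinuity _ _) (hx u hu)
  have hxcont : ContinuousOn x (uIcc t0 t1) := fun u hu =>
    (hx u hu).continuousAt.continuousWithinAt
  have hint : IntervalIntegrable (fun s => -divg (fun z => f z s) (x s))
      MeasureTheory.volume t0 t1 :=
    ((continuous_divg_of_contDiff hf).comp_continuousOn
      (hxcont.prodMk continuousOn_id)).neg.intervalIntegrable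
  have hftc := intervalIntegral.integral_eq_sub_of_hasDerivAt hlog hint
  rw [intervalIntegral.integral_neg] at hftc
  linarith
end
end
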